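/- Let p > 3 be a prime, q > 9 a power of p, and n ≥ 3 (so that SL_n has rank at least 2). Let O = 𝔽_q[[X]] and let H be a subgroup of SL_n(O) such that the reduction homomorphism ξ₁ : SL_n(O) → SL_n(𝔽_q) (induced by the constant-coefficient map) restricts to an isomorphism from H onto SL_n(𝔽_q). Then there exists g ∈ GL_n(O) such that g·H·g⁻¹ = SL_n(𝔽_q), where SL_n(𝔽_q) is viewed as the subgroup of SL_n(O) consisting of matrices with constant (degree-zero) entries. (This is part (ii), for type A_{n-1}, of the theorem lifting the finite subgroup 𝔾(𝔽_q).) -/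

import Mathlib

/-!
Let `σ : SL_n(𝔽_q) → H` invert `ξ₁` on `H`. In characteristic `p` one has `tr (M ^ p) = (tr M) ^ p`,
so as `s` has finite order the trace `y` of `σ s` satisfies `y ^ p ^ a = y ^ p ^ b` for some
`a < b`; such a power series is constant, hence `tr (σ s) = tr s`. The matrices of `SL_n(𝔽_q)`
span `M_n(𝔽_q)`, so the trace form is nondegenerate on them, and an `X`-adic descent transfers
every `O`-linear relation among the constant matrices `s` to the `σ s`. Thus `s ↦ σ s` extends to
an `O`-linear `ψ : M_n(O) → M_n(O)` with `ψ (s * N) = σ s * ψ N`, and the Skolem–Noether matrix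
`B = ∑ l, ψ (E l 0) * E 0 l` satisfies `σ s * B = B * s` and `B ≡ 1 mod X`, so `B` is invertible.
-/

noncomputable section
open Matrix

variable (Fq : Type) [Field Fq] [Fintype Fq] (n : ℕ)

/-- The reduction map `ξ₁ : SL_n(O) → SL_n(𝔽_q)` induced by the constant-coefficient map. -/
def xi1 : SpecialLinearGroup (Fin n) (PowerSeries Fq) →* SpecialLinearGroup (Fin n) Fq :=
  SpecialLinearGroup.map (n := Fin n) (PowerSeries.constantCoeff (R := Fq))

/-- `SL_n(𝔽_q)` viewed inside `SL_n(O)` as the matrices with constant entries. -/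
def SLconst : Subgroup (SpecialLinearGroup (Fin n) (PowerSeries Fq)) :=
  (SpecialLinearGroup.map (n := Fin n) (PowerSeries.C (R := Fq))).range

namespace Matrix
open Polynomial
variable {ι R : Type*} [Fintype ι] [DecidableEq ι] [CommRing R]
variable (p : ℕ) [Fact p.Prime] [CharP R p]

theorem charpoly_pow_char_eq_expand [Nonempty ι] (M : Matrix ι ι R) :
    M.charpoly ^ p = expand R p (M ^ p).charpoly := by
  have hcharmatrix :
      charmatrix M ^ p = (expand R p : R[X] →+* R[X]).mapMatrix (charmatrix (M ^ p)) := by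
    refine matPolyEquiv.injective ?_
    rw [map_pow, matPolyEquiv_charmatrix, sub_pow_char_of_commute p (commute_X (C M)), ← C_pow,
      matPolyEquiv_eq_X_pow_sub_C]
  rw [charpoly, ← det_pow, hcharmatrix, ← AlgHom.coe_toRingHom, ← RingHom.map_det]
  rfl

theorem trace_pow_char (M : Matrix ι ι R) : trace (M ^ p) = trace M ^ p := by
  cases isEmpty_or_nonempty ι
  · simp [trace, zero_pow (Fact.out : p.Prime).ne_zero]
  have hcoeff :=
    congrArg (coeff · ((Fintype.card ι - 1) * p)) (charpoly_pow_char_eq_expand p M)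
  simp only [← map_frobenius_expand, coeff_map, coeff_expand_mul (Fact.out : p.Prime).pos]
    at hcoeff
  rw [trace_eq_neg_charpoly_coeff, trace_eq_neg_charpoly_coeff, ← hcoeff, frobenius_def,
    neg_pow, neg_one_pow_char, neg_one_mul]

theorem trace_pow_char_pow (M : Matrix ι ι R) (k : ℕ) :
    trace (M ^ p ^ k) = trace M ^ p ^ k := by
  induction k with
  | zero => simp
  | succ k ih => rw [pow_succ, pow_mul, trace_pow_char, ih, pow_mul]

end Matrix

namespace PowerSeries

instance charP {R : Type*} [CommRing R] (p : ℕ) [CharP R p] : CharP (PowerSeries R) p :=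
  charP_of_injective_ringHom C_injective p

theorem eq_zero_of_pow_eq_self {R : Type*} [CommRing R] {w : PowerSeries R}
    (hw : constantCoeff w = 0) {N : ℕ} (hN : 1 < N) (h : w ^ N = w) : w = 0 := by
  have hunit : IsUnit (1 - w ^ (N - 1)) := by
    rw [isUnit_iff_constantCoeff, map_sub, map_one, map_pow, hw, zero_pow (by omega), sub_zero]
    exact isUnit_one
  refine hunit.mul_left_eq_zero.mp ?_
  rw [mul_sub, mul_one, ← pow_succ', Nat.sub_add_cancel hN.le, h, sub_self]

variable {K : Type*} [CommRing K] [IsDomain K] (p : ℕ) [Fact p.Prime] [CharP K p]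

theorem eq_C_of_pow_char_pow_eq {y : PowerSeries K} {a b : ℕ} (hab : a < b)
    (h : y ^ p ^ a = y ^ p ^ b) : y = C (constantCoeff y) := by
  have hfix : y ^ p ^ (b - a) = y := by
    refine iterateFrobenius_inj (PowerSeries K) p a ?_
    simp only [iterateFrobenius_def, ← pow_mul, ← pow_add, Nat.sub_add_cancel hab.le, h]
  set c := constantCoeff y
  have hc : c ^ p ^ (b - a) = c := by simpa using congrArg constantCoeff hfix
  have hz : (y - C c) ^ p ^ (b - a) = y - C c := by rw [sub_pow_char_pow, hfix, ← map_pow, hc]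
  refine sub_eq_zero.mp (eq_zero_of_pow_eq_self (by simp [c]) ?_ hz)
  exact Nat.one_lt_pow (by omega) (Fact.out : p.Prime).one_lt

end PowerSeries

open PowerSeries

theorem LinearMap.exists_comp_eq_of_surjective_of_ker_le {R M N P : Type*} [CommRing R]
    [AddCommGroup M] [Module R M] [AddCommGroup N] [Module R N] [AddCommGroup P] [Module R P]
    {f : M →ₗ[R] N} (hf : Function.Surjective f) {g : M →ₗ[R] P} (hker : ker f ≤ ker g) :
    ∃ ψ : N →ₗ[R] P, ψ ∘ₗ f = g :=
  ⟨(ker f).liftQ g hker ∘ₗ (f.quotKerEquivOfSurjective hf).symm.toLinearMap,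
    LinearMap.ext fun x => by simp [quotKerEquivOfSurjective_symm_apply]⟩

namespace Matrix
variable {ι : Type*} [Fintype ι] [DecidableEq ι]

theorem trace_eq_C_of_isOfFinOrder {K : Type*} [CommRing K] [IsDomain K] (p : ℕ) [Fact p.Prime]
    [CharP K p] {M : Matrix ι ι (PowerSeries K)} (hM : IsOfFinOrder M) :
    trace M = C (constantCoeff (trace M)) := by
  have hfin : ((M ^ ·) '' Set.Iio (orderOf M)).Finite := (Set.finite_Iio _).image _
  obtain ⟨a, b, hab, h⟩ := hfin.exists_lt_map_eq_of_forall_mem (f := fun k => M ^ p ^ k)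
    fun k => (Set.mem_image _ _ _).mpr
      ⟨p ^ k % orderOf M, Nat.mod_lt _ hM.orderOf_pos, pow_mod_orderOf M _⟩
  refine eq_C_of_pow_char_pow_eq p hab ?_
  rw [← trace_pow_char_pow, ← trace_pow_char_pow]
  exact congrArg trace h

theorem SpecialLinearGroup.span_range_coe_eq_top {R : Type*} [CommRing R] [Nontrivial ι] :
    Submodule.span R (Set.range (SpecialLinearGroup.coeMonoidHom : SpecialLinearGroup ι R →* _))
      = ⊤ := by
  set V := Submodule.span R (Set.range (SpecialLinearGroup.coeMonoidHom :
    SpecialLinearGroup ι R →* Matrix ι ι R))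
  have hmul : ∀ x ∈ V, ∀ y ∈ V, x * y ∈ V := fun x hx y hy => by
    have hxy : x * y ∈ V * V := Submodule.mul_mem_mul hx hy
    rw [Submodule.span_mul_span] at hxy
    refine Submodule.span_mono ?_ hxy
    rintro _ ⟨_, ⟨a, rfl⟩, _, ⟨b, rfl⟩, rfl⟩
    exact ⟨a * b, map_mul _ a b⟩
  have hoff : ∀ i j, i ≠ j → single i j (1 : R) ∈ V := fun i j hij => by
    have hT : ((SpecialLinearGroup.transvection hij (1 : R) : SpecialLinearGroup ι R) :
        Matrix ι ι R) ∈ V :=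
      Submodule.subset_span ⟨SpecialLinearGroup.transvection hij 1, rfl⟩
    have h1 : (1 : Matrix ι ι R) ∈ V := Submodule.subset_span ⟨1, map_one _⟩
    simpa [SpecialLinearGroup.transvection_coe] using Submodule.sub_mem _ hT h1
  have hsingle : ∀ i j, single i j (1 : R) ∈ V := fun i j => by
    by_cases hij : i = j
    · obtain ⟨k, hk⟩ := exists_ne i
      subst hij
      simpa using hmul _ (hoff i k hk.symm) _ (hoff k i hk)
    · exact hoff i j hij
  refine eq_top_iff.mpr fun M _ => ?_
  rw [matrix_eq_sum_single M]
  refine Submodule.sum_mem _ fun i _ => Submodule.sum_mem _ fun j _ => ?_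
  simpa [smul_single] using Submodule.smul_mem V (M i j) (hsingle i j)

theorem span_range_map_eq_top {R S : Type*} [CommRing R] [CommRing S] (f : R →+* S)
    {α : Type*} {v : α → Matrix ι ι R} (hv : Submodule.span R (Set.range v) = ⊤) :
    Submodule.span S (Set.range fun a => (v a).map f) = ⊤ := by
  have hmap : ∀ N : Matrix ι ι R,
      N.map f ∈ Submodule.span S (Set.range fun a => (v a).map f) := fun N => by
    have hN : N ∈ Submodule.span R (Set.range v) := hv ▸ Submodule.mem_top
    induction hN using Submodule.span_induction with
    | mem N hN => obtain ⟨a, rfl⟩ := hN; exact Submodule.subset_span ⟨a, rfl⟩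
    | zero => simp
    | add N N' _ _ h h' => simpa [Matrix.map_add] using Submodule.add_mem _ h h'
    | smul c N _ h =>
      rw [Matrix.map_smulₛₗ _ f c (fun a => by simp)]
      exact Submodule.smul_mem _ _ h
  refine eq_top_iff.mpr fun M _ => ?_
  rw [matrix_eq_sum_single M]
  refine Submodule.sum_mem _ fun i _ => Submodule.sum_mem _ fun j _ => ?_
  have h := Submodule.smul_mem _ (M i j) (hmap (single i j 1))
  rwa [map_single, map_one, smul_single, smul_eq_mul, mul_one] at h

theorem eq_zero_of_trace_mul_eq_zero {R : Type*} [CommRing R] {T : Set (Matrix ι ι R)}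
    (hT : Submodule.span R T = ⊤) {B : Matrix ι ι R} (hB : ∀ N ∈ T, (B * N).trace = 0) :
    B = 0 := by
  refine ext_iff_trace_mul_right.mpr fun N => ?_
  have hN : N ∈ Submodule.span R T := hT ▸ Submodule.mem_top
  induction hN using Submodule.span_induction with
  | mem N hN => simpa using hB N hN
  | zero => simp
  | add N N' _ _ h h' => simp_all [mul_add]
  | smul c N _ h => simp_all

theorem eq_zero_of_trace_mul_eq_zero_of_span_map_constantCoeff
    {K : Type*} [CommRing K] [IsDomain K]
    {S : Set (Matrix ι ι (PowerSeries K))}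
    (hS : Submodule.span K ((·.map constantCoeff) '' S) = ⊤)
    {A : Matrix ι ι (PowerSeries K)} (hA : ∀ M ∈ S, (A * M).trace = 0) : A = 0 := by
  have hdvd : ∀ k, ∃ A' : Matrix ι ι (PowerSeries K), A = (X : PowerSeries K) ^ k • A' := by
    intro k
    induction k with
    | zero => exact ⟨A, by simp⟩
    | succ k ih =>
      obtain ⟨A', rfl⟩ := ih
      have hA' : ∀ M ∈ S, (A' * M).trace = 0 := fun M hM => by
        simpa [smul_mul_assoc, trace_smul, X_ne_zero] using hA M hM
      have hred : A'.map constantCoeff = 0 := by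
        refine eq_zero_of_trace_mul_eq_zero hS ?_
        rintro _ ⟨M, hM, rfl⟩
        rw [← Matrix.map_mul, ← AddMonoidHom.map_trace, hA' M hM, map_zero]
      choose A'' hA'' using fun i j => X_dvd_iff.mpr (congrFun (congrFun hred i) j)
      refine ⟨Matrix.of A'', Matrix.ext fun i j => ?_⟩
      simp [hA'' i j, pow_succ, mul_assoc]
  refine Matrix.ext fun i j => PowerSeries.ext fun k => ?_
  obtain ⟨A', hA'⟩ := hdvd (k + 1)
  have hdvd' : (X : PowerSeries K) ^ (k + 1) ∣ A i j := ⟨A' i j, by simp [hA']⟩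
  simpa using X_pow_dvd_iff.mp hdvd' k k.lt_succ_self

theorem isUnit_of_isUnit_map_constantCoeff {R : Type*} [CommRing R]
    {B : Matrix ι ι (PowerSeries R)} (h : IsUnit (B.map constantCoeff)) : IsUnit B := by
  rw [isUnit_iff_isUnit_det] at h ⊢
  rwa [isUnit_iff_constantCoeff, RingHom.map_det]

section Intertwiner
variable {R : Type*} [CommRing R]

theorem mul_single_one (A : Matrix ι ι R) (j k : ι) :
    A * single j k 1 = ∑ i, A i j • single i k 1 := by
  ext a b
  simp [mul_apply, single_apply, sum_apply, ite_and]

theorem single_one_mul (A : Matrix ι ι R) (i j : ι) :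
    single i j 1 * A = ∑ k, A j k • single i k 1 := by
  ext a b
  simp [mul_apply, single_apply, sum_apply, ite_and]

/-- The `l`-th column is the `i₀`-th column of `ψ (single l i₀ 1)`; for an algebra endomorphism
`ψ` this is the conjugating matrix of the Skolem–Noether theorem. -/
def intertwiner (ψ : Matrix ι ι R →ₗ[R] Matrix ι ι R) (i₀ : ι) : Matrix ι ι R :=
  ∑ l, ψ (single l i₀ 1) * single i₀ l 1

theorem mul_intertwiner {ψ : Matrix ι ι R →ₗ[R] Matrix ι ι R} {A A' : Matrix ι ι R}
    (h : ∀ N, ψ (A * N) = A' * ψ N) (i₀ : ι) :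
    A' * intertwiner ψ i₀ = intertwiner ψ i₀ * A := by
  calc A' * intertwiner ψ i₀ = ∑ l, ψ (A * single l i₀ 1) * single i₀ l 1 := by
        simp only [intertwiner, Finset.mul_sum, ← mul_assoc, h]
    _ = ∑ l, ∑ m, A m l • (ψ (single m i₀ 1) * single i₀ l 1) := by
        simp only [mul_single_one, map_sum, map_smul, Finset.sum_mul, smul_mul_assoc]
    _ = intertwiner ψ i₀ * A := by
        simp only [intertwiner, Finset.sum_mul, mul_assoc, single_one_mul, Finset.mul_sum,
          mul_smul_comm]
        exact Finset.sum_comm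

theorem intertwiner_id (i₀ : ι) : intertwiner LinearMap.id i₀ = (1 : Matrix ι ι R) := by
  simp [intertwiner, single_mul_single_same, sum_single_one]

theorem map_intertwiner {S : Type*} [CommRing S] {f : R →+* S}
    {ψ : Matrix ι ι R →ₗ[R] Matrix ι ι R} (hψ : ∀ N, (ψ N).map f = N.map f) (i₀ : ι) :
    (intertwiner ψ i₀).map f = 1 := by
  calc (intertwiner ψ i₀).map f = (intertwiner LinearMap.id i₀).map f := by
        simp only [intertwiner, ← f.mapMatrix_apply, map_sum, map_mul]
        simp only [f.mapMatrix_apply, hψ, LinearMap.id_apply]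
    _ = 1 := by rw [intertwiner_id, Matrix.map_one _ f.map_zero f.map_one]

end Intertwiner

section Lift
variable {K : Type*} [CommRing K] [IsDomain K] {G : Type*} [Fintype G]

theorem sum_smul_eq_zero_of_sum_smul_map_C_eq_zero [Monoid G]
    {ρ : G →* Matrix ι ι K} {σ : G →* Matrix ι ι (PowerSeries K)}
    (hspan : Submodule.span K (Set.range ρ) = ⊤)
    (hred : ∀ g, (σ g).map constantCoeff = ρ g)
    (htr : ∀ g, trace (σ g) = C (trace (ρ g)))
    {y : G → PowerSeries K} (hy : ∑ g, y g • (ρ g).map C = 0) : ∑ g, y g • σ g = 0 := by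
  refine eq_zero_of_trace_mul_eq_zero_of_span_map_constantCoeff (S := Set.range σ) ?_ ?_
  · rwa [← Set.range_comp, show (·.map constantCoeff) ∘ σ = ρ from funext hred]
  · rintro _ ⟨t, rfl⟩
    calc trace ((∑ g, y g • σ g) * σ t)
        = ∑ g, y g • C (trace (ρ (g * t))) := by
          simp [Finset.sum_mul, trace_sum, ← map_mul, htr]
      _ = trace ((∑ g, y g • (ρ g).map C) * (ρ t).map C) := by
          simp [Finset.sum_mul, trace_sum, ← Matrix.map_mul, ← AddMonoidHom.map_trace]
      _ = 0 := by rw [hy, zero_mul, trace_zero]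

theorem exists_linearMap_map_C_mul_eq [Monoid G]
    {ρ : G →* Matrix ι ι K} {σ : G →* Matrix ι ι (PowerSeries K)}
    (hspan : Submodule.span K (Set.range ρ) = ⊤)
    (hred : ∀ g, (σ g).map constantCoeff = ρ g)
    (htr : ∀ g, trace (σ g) = C (trace (ρ g))) :
    ∃ ψ : Matrix ι ι (PowerSeries K) →ₗ[PowerSeries K] Matrix ι ι (PowerSeries K),
      (∀ g N, ψ ((ρ g).map C * N) = σ g * ψ N) ∧
        ∀ N, (ψ N).map constantCoeff = N.map constantCoeff := by
  let ρC : G → Matrix ι ι (PowerSeries K) := fun g => (ρ g).map C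
  have hspanC : Submodule.span (PowerSeries K) (Set.range ρC) = ⊤ :=
    span_range_map_eq_top (C (R := K)) hspan
  let L₁ := Fintype.linearCombination (PowerSeries K) ρC
  let L₂ := Fintype.linearCombination (PowerSeries K) σ
  have hL₁ : Function.Surjective L₁ := by
    rw [← LinearMap.range_eq_top, Fintype.range_linearCombination, hspanC]
  have hker : LinearMap.ker L₁ ≤ LinearMap.ker L₂ := fun y hy => by
    simp only [LinearMap.mem_ker, L₁, L₂, Fintype.linearCombination_apply] at hy ⊢
    exact sum_smul_eq_zero_of_sum_smul_map_C_eq_zero hspan hred htr hy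
  obtain ⟨ψ, hψ⟩ := LinearMap.exists_comp_eq_of_surjective_of_ker_le hL₁ hker
  have hψρ : ∀ g, ψ (ρC g) = σ g := fun g => by
    classical
    simpa [L₁, L₂, Fintype.linearCombination_apply_single] using
      LinearMap.congr_fun hψ (Pi.single g 1)
  refine ⟨ψ, fun g => LinearMap.congr_fun (?_ : ψ ∘ₗ LinearMap.mulLeft _ (ρC g) =
    LinearMap.mulLeft _ (σ g) ∘ₗ ψ), fun N => ?_⟩
  · refine LinearMap.ext_on_range hspanC fun h => ?_
    simp [ρC, hψρ, ← map_mul, ← Matrix.map_mul]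
  · obtain ⟨y, rfl⟩ := hL₁ N
    rw [← LinearMap.comp_apply, hψ]
    ext i j
    simp [L₁, L₂, ρC, Fintype.linearCombination_apply, Matrix.sum_apply, ← hred]

theorem exists_conj_eq_map_C [Monoid G] [Nonempty ι]
    (ρ : G →* Matrix ι ι K) (σ : G →* Matrix ι ι (PowerSeries K))
    (hspan : Submodule.span K (Set.range ρ) = ⊤)
    (hred : ∀ g, (σ g).map constantCoeff = ρ g)
    (htr : ∀ g, trace (σ g) = C (trace (ρ g))) :
    ∃ B : (Matrix ι ι (PowerSeries K))ˣ, ∀ g,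
      (↑B⁻¹ : Matrix ι ι (PowerSeries K)) * σ g * (B : Matrix ι ι (PowerSeries K)) =
        (ρ g).map C := by
  obtain ⟨ψ, hψmul, hψred⟩ := exists_linearMap_map_C_mul_eq hspan hred htr
  obtain ⟨i₀⟩ := ‹Nonempty ι›
  have hB : IsUnit (intertwiner ψ i₀) :=
    isUnit_of_isUnit_map_constantCoeff (by rw [map_intertwiner hψred]; exact isUnit_one)
  refine ⟨hB.unit, fun g => ?_⟩
  rw [IsUnit.unit_spec, mul_assoc, mul_intertwiner (hψmul g), ← mul_assoc, hB.val_inv_mul,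
    one_mul]

theorem exists_conj_eq_map_C_of_charP (p : ℕ) [Fact p.Prime] [CharP K p] [Group G] [Nonempty ι]
    (ρ : G →* Matrix ι ι K) (σ : G →* Matrix ι ι (PowerSeries K))
    (hspan : Submodule.span K (Set.range ρ) = ⊤)
    (hred : ∀ g, (σ g).map constantCoeff = ρ g) :
    ∃ B : (Matrix ι ι (PowerSeries K))ˣ, ∀ g,
      (↑B⁻¹ : Matrix ι ι (PowerSeries K)) * σ g * (B : Matrix ι ι (PowerSeries K)) =
        (ρ g).map C := by
  refine exists_conj_eq_map_C ρ σ hspan hred fun g => ?_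
  rw [trace_eq_C_of_isOfFinOrder p (σ.isOfFinOrder (isOfFinOrder_of_finite g)),
    AddMonoidHom.map_trace, hred]

end Lift

end Matrix

theorem conjugate_finite_subgroup_to_SL_Fq
    (p : ℕ) (hp : p.Prime)
    [CharP Fq p] (hn : 3 ≤ n)
    (H : Subgroup (SpecialLinearGroup (Fin n) (PowerSeries Fq)))
    (hinj : Function.Injective (fun h : ↥H => xi1 Fq n (h : SpecialLinearGroup (Fin n) (PowerSeries Fq))))
    (hsurj : Function.Surjective (fun h : ↥H => xi1 Fq n (h : SpecialLinearGroup (Fin n) (PowerSeries Fq)))) :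
    ∃ g : (Matrix (Fin n) (Fin n) (PowerSeries Fq))ˣ,
      {x : SpecialLinearGroup (Fin n) (PowerSeries Fq) |
          ∃ h ∈ H, (x : Matrix (Fin n) (Fin n) (PowerSeries Fq)) =
            (g : Matrix (Fin n) (Fin n) (PowerSeries Fq)) * h *
              ((g⁻¹ : (Matrix (Fin n) (Fin n) (PowerSeries Fq))ˣ) :
                Matrix (Fin n) (Fin n) (PowerSeries Fq))}
        = (SLconst Fq n : Set (SpecialLinearGroup (Fin n) (PowerSeries Fq))) := by
  classical
  have : Fact p.Prime := ⟨hp⟩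
  have : Nontrivial (Fin n) := Fin.nontrivial_iff_two_le.mpr (by omega)
  let e : H ≃* SpecialLinearGroup (Fin n) Fq :=
    MulEquiv.ofBijective ((xi1 Fq n).comp H.subtype) ⟨hinj, hsurj⟩
  let σ := SpecialLinearGroup.coeMonoidHom.comp (H.subtype.comp e.symm.toMonoidHom)
  have hσ : ∀ h : H, σ (e h) = h := fun h => by simp [σ]
  obtain ⟨B, hB⟩ := exists_conj_eq_map_C_of_charP p SpecialLinearGroup.coeMonoidHom σ
    SpecialLinearGroup.span_range_coe_eq_top
    (fun s => congrArg Subtype.val (e.apply_symm_apply s))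
  refine ⟨B⁻¹, Set.ext fun x => ⟨?_, ?_⟩⟩
  · rintro ⟨h, hh, hx⟩
    refine ⟨e ⟨h, hh⟩, Subtype.ext ?_⟩
    rw [hx, inv_inv, ← hσ ⟨h, hh⟩, hB]
    rfl
  · rintro ⟨s, rfl⟩
    refine ⟨e.symm s, (e.symm s).2, ?_⟩
    rw [inv_inv]
    exact (hB s).symm
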